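/- Let g be the 3-dimensional Lie algebra spanned by ξ, E1, E2 with brackets [E1,E2] = 2k·ξ, [E2,ξ] = −(λ+c)·E1, [ξ,E1] = (λ−c)·E2, with Riemannian inner product making (ξ,E1,E2) orthonormal. Then the Levi-Civita connection and curvature of the associated left-invariant metric satisfy R(E1,ξ)ξ = (k²−λ²+2λ(k+c))·E1, R(E2,ξ)ξ = (k²−λ²−2λ(k+c))·E2, and R(E1,E2)ξ = 0. -/

import Mathlib

noncomputable section

/-- Reeb vector ξ and frame E1, E2 as the standard basis of ℝ³. -/
def ξ : Fin 3 → ℝ := ![1, 0, 0]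
def E1 : Fin 3 → ℝ := ![0, 1, 0]
def E2 : Fin 3 → ℝ := ![0, 0, 1]

/-- Inner product making (ξ, E1, E2) orthonormal. -/
def ip (x y : Fin 3 → ℝ) : ℝ := x 0 * y 0 + x 1 * y 1 + x 2 * y 2

/-- Bracket [E1,E2] = 2k ξ, [E2,ξ] = −(λ+c) E1, [ξ,E1] = (λ−c) E2,
extended bilinearly and antisymmetrically. -/
def br (k lam c : ℝ) (x y : Fin 3 → ℝ) : Fin 3 → ℝ :=
  ![2 * k * (x 1 * y 2 - x 2 * y 1),
    (lam + c) * (x 0 * y 2 - x 2 * y 0),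
    (lam - c) * (x 0 * y 1 - x 1 * y 0)]

/-! The Koszul formula determines `∇` through the nondegenerate inner product, which makes `∇`
bilinear and gives its values on the frame: `∇_ξ ξ = ∇_{E1} E1 = ∇_{E2} E2 = 0`,
`∇_{E1} ξ = -(λ+k) E2`, `∇_{E2} ξ = (k-λ) E1`, `∇_ξ E1 = -(k+c) E2`, `∇_ξ E2 = (k+c) E1`.
Expanding `R(X,Y)ξ` on the frame with this table gives the three curvature values. -/

def IsKoszulConnection (k lam c : ℝ) (nabla : (Fin 3 → ℝ) → (Fin 3 → ℝ) → (Fin 3 → ℝ)) :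
    Prop :=
  ∀ X Y Z, 2 * ip (nabla X Y) Z =
    ip (br k lam c X Y) Z - ip (br k lam c Y Z) X + ip (br k lam c Z X) Y

theorem eq_of_forall_ip_eq {v w : Fin 3 → ℝ} (h : ∀ Z, ip v Z = ip w Z) : v = w := by
  have h0 := h ξ
  have h1 := h E1
  have h2 := h E2
  simp only [ip, ξ, E1, E2, Matrix.cons_val, mul_zero, mul_one, add_zero, zero_add] at h0 h1 h2
  funext i
  fin_cases i <;> assumption

theorem ip_smul_left (a : ℝ) (X Y : Fin 3 → ℝ) : ip (a • X) Y = a * ip X Y := by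
  simp only [ip, Pi.smul_apply, smul_eq_mul]
  ring

theorem ip_smul_right (a : ℝ) (X Y : Fin 3 → ℝ) : ip X (a • Y) = a * ip X Y := by
  simp only [ip, Pi.smul_apply, smul_eq_mul]
  ring

theorem br_smul_left (k lam c a : ℝ) (X Y : Fin 3 → ℝ) :
    br k lam c (a • X) Y = a • br k lam c X Y := by
  funext i
  fin_cases i <;> simp [br] <;> ring

theorem br_smul_right (k lam c a : ℝ) (X Y : Fin 3 → ℝ) :
    br k lam c X (a • Y) = a • br k lam c X Y := by
  funext i
  fin_cases i <;> simp [br] <;> ring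

theorem br_E1_ξ (k lam c : ℝ) : br k lam c E1 ξ = -(lam - c) • E2 := by
  funext i
  fin_cases i <;> simp [br, E1, ξ, E2]

theorem br_E2_ξ (k lam c : ℝ) : br k lam c E2 ξ = -(lam + c) • E1 := by
  funext i
  fin_cases i <;> simp [br, E1, ξ, E2]

theorem br_E1_E2 (k lam c : ℝ) : br k lam c E1 E2 = (2 * k) • ξ := by
  funext i
  fin_cases i <;> simp [br, E1, ξ, E2]

namespace IsKoszulConnection

variable {k lam c : ℝ} {nabla : (Fin 3 → ℝ) → (Fin 3 → ℝ) → (Fin 3 → ℝ)}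

theorem nabla_eq_of_koszul (hK : IsKoszulConnection k lam c nabla) {X Y V : Fin 3 → ℝ}
    (hV : ∀ Z, 2 * ip V Z =
      ip (br k lam c X Y) Z - ip (br k lam c Y Z) X + ip (br k lam c Z X) Y) :
    nabla X Y = V :=
  eq_of_forall_ip_eq fun Z => by linarith [hK X Y Z, hV Z]

theorem nabla_smul_left (hK : IsKoszulConnection k lam c nabla) (a : ℝ) (X Y : Fin 3 → ℝ) :
    nabla (a • X) Y = a • nabla X Y :=
  hK.nabla_eq_of_koszul fun Z => by
    simp only [br_smul_left, br_smul_right, ip_smul_left, ip_smul_right]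
    linear_combination a * hK X Y Z

theorem nabla_smul_right (hK : IsKoszulConnection k lam c nabla) (a : ℝ) (X Y : Fin 3 → ℝ) :
    nabla X (a • Y) = a • nabla X Y :=
  hK.nabla_eq_of_koszul fun Z => by
    simp only [br_smul_left, br_smul_right, ip_smul_left, ip_smul_right]
    linear_combination a * hK X Y Z

theorem nabla_zero_right (hK : IsKoszulConnection k lam c nabla) (X : Fin 3 → ℝ) :
    nabla X 0 = 0 := by
  simpa using hK.nabla_smul_right 0 X 0

theorem nabla_ξ_ξ (hK : IsKoszulConnection k lam c nabla) : nabla ξ ξ = 0 :=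
  hK.nabla_eq_of_koszul fun Z => by simp [ip, br, ξ]

theorem nabla_E1_E1 (hK : IsKoszulConnection k lam c nabla) : nabla E1 E1 = 0 :=
  hK.nabla_eq_of_koszul fun Z => by simp [ip, br, E1]

theorem nabla_E2_E2 (hK : IsKoszulConnection k lam c nabla) : nabla E2 E2 = 0 :=
  hK.nabla_eq_of_koszul fun Z => by simp [ip, br, E2]

theorem nabla_E1_ξ (hK : IsKoszulConnection k lam c nabla) : nabla E1 ξ = -(lam + k) • E2 :=
  hK.nabla_eq_of_koszul fun Z => by simp [ip, br, ξ, E1, E2]; ring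

theorem nabla_E2_ξ (hK : IsKoszulConnection k lam c nabla) : nabla E2 ξ = (k - lam) • E1 :=
  hK.nabla_eq_of_koszul fun Z => by simp [ip, br, ξ, E1, E2]; ring

theorem nabla_ξ_E1 (hK : IsKoszulConnection k lam c nabla) : nabla ξ E1 = -(k + c) • E2 :=
  hK.nabla_eq_of_koszul fun Z => by simp [ip, br, ξ, E1, E2]; ring

theorem nabla_ξ_E2 (hK : IsKoszulConnection k lam c nabla) : nabla ξ E2 = (k + c) • E1 :=
  hK.nabla_eq_of_koszul fun Z => by simp [ip, br, ξ, E1, E2]; ring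

end IsKoszulConnection

theorem curvature_of_unimodular_frame (k lam c : ℝ)
    (nabla : (Fin 3 → ℝ) → (Fin 3 → ℝ) → (Fin 3 → ℝ))
    (hK : ∀ X Y Z, 2 * ip (nabla X Y) Z =
      ip (br k lam c X Y) Z - ip (br k lam c Y Z) X + ip (br k lam c Z X) Y)
    (R : (Fin 3 → ℝ) → (Fin 3 → ℝ) → (Fin 3 → ℝ) → (Fin 3 → ℝ))
    (hR : ∀ X Y Z, R X Y Z =
      nabla X (nabla Y Z) - nabla Y (nabla X Z) - nabla (br k lam c X Y) Z) :
    R E1 ξ ξ = (k ^ 2 - lam ^ 2 + 2 * lam * (k + c)) • E1 ∧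
    R E2 ξ ξ = (k ^ 2 - lam ^ 2 - 2 * lam * (k + c)) • E2 ∧
    R E1 E2 ξ = 0 := by
  have hLC : IsKoszulConnection k lam c nabla := hK
  refine ⟨?_, ?_, ?_⟩
  · rw [hR, hLC.nabla_ξ_ξ, hLC.nabla_zero_right, hLC.nabla_E1_ξ, hLC.nabla_smul_right,
      hLC.nabla_ξ_E2, br_E1_ξ, hLC.nabla_smul_left, hLC.nabla_E2_ξ]
    module
  · rw [hR, hLC.nabla_ξ_ξ, hLC.nabla_zero_right, hLC.nabla_E2_ξ, hLC.nabla_smul_right,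
      hLC.nabla_ξ_E1, br_E2_ξ, hLC.nabla_smul_left, hLC.nabla_E1_ξ]
    module
  · rw [hR, hLC.nabla_E2_ξ, hLC.nabla_E1_ξ, hLC.nabla_smul_right, hLC.nabla_smul_right,
      hLC.nabla_E1_E1, hLC.nabla_E2_E2, br_E1_E2, hLC.nabla_smul_left, hLC.nabla_ξ_ξ]
    module
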